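/- arXiv:1804.05271 — 7 statements merged into one kernel-verified Lean document; each statement's English description precedes it below -/
import Mathlib

section
/- Let a single node's iterate and the centralized iterate start at the same point, w_i(0) = v(0), and evolve by w_i(t) = w_i(t−1) − η∇F_i(w_i(t−1)) and v(t) = v(t−1) − η∇F(v(t−1)). If F_i is β-smooth and ‖∇F_i(x) − ∇F(x)‖ ≤ δ_i for all x, then for every integer t ≥ 0, ‖w_i(t) − v(t)‖ ≤ g_i(t), where g_i(x) = (δ_i/β)((ηβ+1)^x − 1). -/
/-- Single-node gap bound.  If `w` and `v` start at the same point and evolve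
by `w t = w (t-1) - η • ∇F_i(w (t-1))` and `v t = v (t-1) - η • ∇F(v (t-1))`, with `F_i`
β-smooth and `‖∇F_i(x) - ∇F(x)‖ ≤ δ_i` for all `x`, then for every `t ≥ 0`,
`‖w t - v t‖ ≤ g_i(t) = (δ_i/β)((ηβ+1)^t - 1)`. -/
theorem local_iterate_gap_bound
    {E : Type*} [NormedAddCommGroup E] [InnerProductSpace ℝ E] [CompleteSpace E]
    (Fi F : E → ℝ) (η β δi : ℝ)
    (hη : 0 < η) (hβ : 0 < β) (hδi : 0 ≤ δi)
    (hFi : Differentiable ℝ Fi) (hF : Differentiable ℝ F)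
    (hsmooth : ∀ w w' : E, ‖gradient Fi w - gradient Fi w'‖ ≤ β * ‖w - w'‖)
    (hdiv : ∀ x : E, ‖gradient Fi x - gradient F x‖ ≤ δi)
    (w v : ℕ → E)
    (h0 : w 0 = v 0)
    (hw : ∀ t : ℕ, 1 ≤ t → w t = w (t - 1) - η • gradient Fi (w (t - 1)))
    (hv : ∀ t : ℕ, 1 ≤ t → v t = v (t - 1) - η • gradient F (v (t - 1))) :
    ∀ t : ℕ, ‖w t - v t‖ ≤ (δi / β) * ((η * β + 1) ^ t - 1) := by
  intro t
  induction t with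
  | zero => simp [h0]
  | succ n ih =>
    have hw' := hw (n + 1) (by omega)
    have hv' := hv (n + 1) (by omega)
    simp only [Nat.add_sub_cancel] at hw' hv'
    have key : w (n + 1) - v (n + 1)
        = (w n - v n) - η • (gradient Fi (w n) - gradient Fi (v n))
          - η • (gradient Fi (v n) - gradient F (v n)) := by
      rw [hw', hv']
      simp [smul_sub]
      abel
    have h1 : ‖w (n + 1) - v (n + 1)‖
        ≤ ‖w n - v n‖ + η * ‖gradient Fi (w n) - gradient Fi (v n)‖
          + η * ‖gradient Fi (v n) - gradient F (v n)‖ := by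
      rw [key]
      calc _ ≤ ‖(w n - v n) - η • (gradient Fi (w n) - gradient Fi (v n))‖
              + ‖η • (gradient Fi (v n) - gradient F (v n))‖ := norm_sub_le _ _
        _ ≤ _ := by
            gcongr
            · calc _ ≤ ‖w n - v n‖ + ‖η • (gradient Fi (w n) - gradient Fi (v n))‖ :=
                    norm_sub_le _ _
                _ = _ := by rw [norm_smul, Real.norm_of_nonneg hη.le]
            · rw [norm_smul, Real.norm_of_nonneg hη.le]
    have h2 : ‖w (n + 1) - v (n + 1)‖ ≤ ‖w n - v n‖ + η * (β * ‖w n - v n‖) + η * δi := by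
      refine h1.trans ?_
      gcongr
      · exact hsmooth _ _
      · exact hdiv _
    refine h2.trans ?_
    have hb : (0:ℝ) < η * β := mul_pos hη hβ
    have hpow : (1:ℝ) ≤ (η * β + 1) ^ n := one_le_pow₀ (by linarith)
    have hgoal : (δi / β) * ((η * β + 1) ^ (n + 1) - 1)
        = (η * β + 1) * ((δi / β) * ((η * β + 1) ^ n - 1)) + η * δi := by
      field_simp
      ring
    rw [hgoal]
    nlinarith [ih, mul_pos hη hβ]
end

section
/- Suppose all local iterates and the centralized iterate start at the same point (w_i(0) = v(0) for all i), each node updates w_i(t) = w_i(t−1) − η∇F_i(w_i(t−1)), the averaged iterate is w(t) = (∑_{i=1}^N D_i w_i(t))/D, and the centralized iterate updates v(t) = v(t−1) − η∇F(v(t−1)). Then for every integer t ≥ 0, ‖w(t) − v(t)‖ ≤ h(t), where h(x) = (δ/β)((ηβ+1)^x − 1) − ηδx. -/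
/-!
Write `e_i(t) = w_i(t) - v(t)`. One step of node `i` changes `e_i` by `η` times the gradient
difference `∇F_i(w_i) - ∇F(v)`, which β-smoothness and the divergence bound split as
`β ‖e_i‖ + δ_i`; hence `‖e_i(t)‖ ≤ (δ_i/β)((ηβ+1)^t - 1)`. Since `∇F` is the `D`-weighted
average of the `∇F_i`, one step changes `w - v` by `η` times the weighted average of
`∇F_i(w_i) - ∇F_i(v)`, of norm at most `ηδ((ηβ+1)^t - 1)`; summing these increments gives `h(t)`.
-/

theorem le_geom_of_le_mul_add {a : ℕ → ℝ} {η β δ : ℝ} (hβ : β ≠ 0) (hηβ : 0 ≤ 1 + η * β)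
    (h0 : a 0 ≤ 0) (hstep : ∀ t, a (t + 1) ≤ (1 + η * β) * a t + η * δ) (t : ℕ) :
    a t ≤ δ / β * ((η * β + 1) ^ t - 1) := by
  induction t with
  | zero => simpa using h0
  | succ t ih =>
    calc a (t + 1) ≤ (1 + η * β) * (δ / β * ((η * β + 1) ^ t - 1)) + η * δ := by
          grw [hstep t, ih]
      _ = δ / β * ((η * β + 1) ^ (t + 1) - 1) := by
          field_simp
          ring

theorem le_of_le_add_geom {a : ℕ → ℝ} {η β δ : ℝ} (hβ : β ≠ 0) (h0 : a 0 ≤ 0)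
    (hstep : ∀ t, a (t + 1) ≤ a t + η * δ * ((η * β + 1) ^ t - 1)) (t : ℕ) :
    a t ≤ δ / β * ((η * β + 1) ^ t - 1) - η * δ * t := by
  induction t with
  | zero => simpa using h0
  | succ t ih =>
    calc a (t + 1) ≤ δ / β * ((η * β + 1) ^ t - 1) - η * δ * t + η * δ * ((η * β + 1) ^ t - 1) := by
          grw [hstep t, ih]
      _ = δ / β * ((η * β + 1) ^ (t + 1) - 1) - η * δ * ↑(t + 1) := by
          push_cast
          field_simp
          ring

section

variable {E : Type*} [NormedAddCommGroup E] [NormedSpace ℝ E]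

theorem norm_sub_le_of_perturbed_descent {g g' : E → E} {x y : ℕ → E} {η β δ : ℝ}
    (hη : 0 ≤ η) (hβ : 0 < β) (hg : ∀ a b, ‖g a - g b‖ ≤ β * ‖a - b‖)
    (hgg' : ∀ a, ‖g a - g' a‖ ≤ δ) (h0 : x 0 = y 0)
    (hx : ∀ t, x (t + 1) = x t - η • g (x t)) (hy : ∀ t, y (t + 1) = y t - η • g' (y t))
    (t : ℕ) : ‖x t - y t‖ ≤ δ / β * ((η * β + 1) ^ t - 1) := by
  refine le_geom_of_le_mul_add (a := fun t => ‖x t - y t‖) hβ.ne' (by positivity) (by simp [h0])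
    (fun t => ?_) t
  have hsplit : x (t + 1) - y (t + 1)
      = (x t - y t) - η • (g (x t) - g (y t)) - η • (g (y t) - g' (y t)) := by
    rw [hx, hy]; module
  calc ‖x (t + 1) - y (t + 1)‖
      ≤ ‖x t - y t‖ + ‖η • (g (x t) - g (y t))‖ + ‖η • (g (y t) - g' (y t))‖ := by
        rw [hsplit]; exact norm_sub_le_of_le (norm_sub_le _ _) le_rfl
    _ = ‖x t - y t‖ + η * ‖g (x t) - g (y t)‖ + η * ‖g (y t) - g' (y t)‖ := by
        rw [norm_smul, norm_smul, Real.norm_of_nonneg hη]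
    _ ≤ ‖x t - y t‖ + η * (β * ‖x t - y t‖) + η * δ := by grw [hg, hgg']
    _ = (1 + η * β) * ‖x t - y t‖ + η * δ := by ring

theorem norm_weighted_avg_sub_succ_le {ι : Type*} [Fintype ι] {D c : ι → ℝ} {g : ι → E → E}
    {w : ι → ℕ → E} {v : ℕ → E} {η : ℝ} {t : ℕ} (hη : 0 ≤ η) (hD : ∀ i, 0 ≤ D i)
    (hw : ∀ i, w i (t + 1) = w i t - η • g i (w i t))
    (hv : v (t + 1) = v t - η • (∑ j, D j)⁻¹ • ∑ j, D j • g j (v t))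
    (hc : ∀ i, ‖g i (w i t) - g i (v t)‖ ≤ c i) :
    ‖(∑ j, D j)⁻¹ • ∑ j, D j • w j (t + 1) - v (t + 1)‖
      ≤ ‖(∑ j, D j)⁻¹ • ∑ j, D j • w j t - v t‖ + η * ((∑ j, D j * c j) / ∑ j, D j) := by
  have hsplit : (∑ j, D j)⁻¹ • ∑ j, D j • w j (t + 1) - v (t + 1)
      = ((∑ j, D j)⁻¹ • ∑ j, D j • w j t - v t)
        - η • (∑ j, D j)⁻¹ • ∑ j, D j • (g j (w j t) - g j (v t)) := by
    have hcomm : ∑ j, D j • η • g j (w j t) = η • ∑ j, D j • g j (w j t) := by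
      simp only [Finset.smul_sum, smul_comm η]
    simp only [hw, hv, smul_sub, Finset.sum_sub_distrib, hcomm]
    module
  have hsum : ‖∑ j, D j • (g j (w j t) - g j (v t))‖ ≤ ∑ j, D j * c j := by
    refine (norm_sum_le _ _).trans (Finset.sum_le_sum fun j _ => ?_)
    rw [norm_smul, Real.norm_of_nonneg (hD j)]
    exact mul_le_mul_of_nonneg_left (hc j) (hD j)
  rw [hsplit, div_eq_inv_mul]
  refine norm_sub_le_of_le le_rfl ?_
  have hSinv : 0 ≤ (∑ j, D j)⁻¹ := inv_nonneg.2 (Finset.sum_nonneg fun j _ => hD j)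
  rw [norm_smul, norm_smul, Real.norm_of_nonneg hη, Real.norm_of_nonneg hSinv]
  exact mul_le_mul_of_nonneg_left (mul_le_mul_of_nonneg_left hsum hSinv) hη

end

theorem gradient_weighted_average {E ι : Type*} [NormedAddCommGroup E] [InnerProductSpace ℝ E]
    [CompleteSpace E] [Fintype ι] {F : ι → E → ℝ} (D : ι → ℝ)
    (hF : ∀ i, Differentiable ℝ (F i)) (x : E) :
    gradient (fun u => (∑ j, D j * F j u) / ∑ j, D j) x
      = (∑ j, D j)⁻¹ • ∑ j, D j • gradient (F j) x := by
  have hsum : HasGradientAt (fun u => ∑ j, D j * F j u) (∑ j, D j • gradient (F j) x) x := by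
    rw [hasGradientAt_iff_hasFDerivAt, map_sum]
    refine HasFDerivAt.fun_sum fun j _ => ?_
    simpa only [map_smul] using ((hF j x).hasGradientAt.hasFDerivAt).const_mul (D j)
  refine HasGradientAt.gradient ?_
  rw [hasGradientAt_iff_hasFDerivAt, map_smul]
  simpa only [div_eq_inv_mul] using hsum.hasFDerivAt.const_mul (∑ j, D j)⁻¹

theorem averaged_iterate_gap_bound_general
    {E : Type*} [NormedAddCommGroup E] [InnerProductSpace ℝ E] [CompleteSpace E]
    {N : ℕ} (hN : 0 < N)
    (F : Fin N → E → ℝ) (D : Fin N → ℝ) (δi : Fin N → ℝ) (η β : ℝ)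
    (hη : 0 < η) (hβ : 0 < β)
    (hD : ∀ i, 0 < D i)
    (hdiff : ∀ i, Differentiable ℝ (F i))
    (hsmooth : ∀ i, ∀ x x' : E,
      ‖gradient (F i) x - gradient (F i) x'‖ ≤ β * ‖x - x'‖)
    (hdiv : ∀ i, ∀ x : E,
      ‖gradient (F i) x -
        gradient (fun u => (∑ j, D j * F j u) / (∑ j, D j)) x‖ ≤ δi i)
    (w : Fin N → ℕ → E) (v : ℕ → E)
    (h0 : ∀ i, w i 0 = v 0)
    (hw : ∀ i, ∀ t : ℕ, 1 ≤ t →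
      w i t = w i (t - 1) - η • gradient (F i) (w i (t - 1)))
    (hv : ∀ t : ℕ, 1 ≤ t →
      v t = v (t - 1) -
        η • gradient (fun u => (∑ j, D j * F j u) / (∑ j, D j)) (v (t - 1))) :
    ∀ t : ℕ,
      ‖(1 / ∑ j, D j) • (∑ j, D j • w j t) - v t‖ ≤
        ((∑ j, D j * δi j) / (∑ j, D j)) / β * ((η * β + 1) ^ t - 1) -
          η * ((∑ j, D j * δi j) / (∑ j, D j)) * t := by
  have hS : (∑ j, D j) ≠ 0 := (Finset.sum_pos (fun i _ => hD i) ⟨⟨0, hN⟩, Finset.mem_univ _⟩).ne'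
  have hw' (i : Fin N) (t : ℕ) : w i (t + 1) = w i t - η • gradient (F i) (w i t) :=
    hw i (t + 1) t.succ_pos
  have hv' (t : ℕ) : v (t + 1) = v t - η • (∑ j, D j)⁻¹ • ∑ j, D j • gradient (F j) (v t) := by
    rw [hv (t + 1) t.succ_pos, gradient_weighted_average D hdiff]; rfl
  have hnode (j : Fin N) (t : ℕ) : ‖w j t - v t‖ ≤ δi j / β * ((η * β + 1) ^ t - 1) :=
    norm_sub_le_of_perturbed_descent hη.le hβ (hsmooth j) (hdiv j) (h0 j) (hw' j)
      (fun t => hv (t + 1) t.succ_pos) t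
  intro t
  rw [one_div]
  refine le_of_le_add_geom (a := fun t => ‖(∑ j, D j)⁻¹ • ∑ j, D j • w j t - v t‖) hβ.ne'
    ?_ (fun t => ?_) t
  · simp [h0, ← Finset.sum_smul, hS]
  · have hgap (j : Fin N) : ‖gradient (F j) (w j t) - gradient (F j) (v t)‖
        ≤ δi j * ((η * β + 1) ^ t - 1) :=
      (hsmooth j _ _).trans <| (mul_le_mul_of_nonneg_left (hnode j t) hβ.le).trans_eq
        (by field_simp)
    refine (norm_weighted_avg_sub_succ_le hη.le (fun i => (hD i).le) (hw' · t) (hv' t)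
      hgap).trans_eq ?_
    simp only [← mul_assoc, ← Finset.sum_mul]
    ring

/-- Theorem 1, norm version: If all local iterates and the centralized
iterate start at the same point, each node updates
`w_i(t) = w_i(t-1) - η • ∇F_i(w_i(t-1))`, the averaged iterate is
`w(t) = (∑ i, D i • w_i(t)) / D`, and the centralized iterate updates
`v(t) = v(t-1) - η • ∇F(v(t-1))` where `F = (∑ i, D i * F_i)/D`, then for every `t ≥ 0`,
`‖w(t) - v(t)‖ ≤ h(t) = (δ/β)((ηβ+1)^t - 1) - ηδt` with `δ = (∑ i, D i * δ_i)/D`. -/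
theorem averaged_iterate_gap_bound
    {E : Type*} [NormedAddCommGroup E] [InnerProductSpace ℝ E] [CompleteSpace E]
    {N : ℕ} (hN : 0 < N)
    (F : Fin N → E → ℝ) (D : Fin N → ℝ) (δi : Fin N → ℝ) (η β : ℝ)
    (hη : 0 < η) (hβ : 0 < β)
    (hD : ∀ i, 0 < D i) (hδi : ∀ i, 0 ≤ δi i)
    (hdiff : ∀ i, Differentiable ℝ (F i))
    (hsmooth : ∀ i, ∀ x x' : E,
      ‖gradient (F i) x - gradient (F i) x'‖ ≤ β * ‖x - x'‖)
    (hdiv : ∀ i, ∀ x : E,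
      ‖gradient (F i) x -
        gradient (fun u => (∑ j, D j * F j u) / (∑ j, D j)) x‖ ≤ δi i)
    (w : Fin N → ℕ → E) (v : ℕ → E)
    (h0 : ∀ i, w i 0 = v 0)
    (hw : ∀ i, ∀ t : ℕ, 1 ≤ t →
      w i t = w i (t - 1) - η • gradient (F i) (w i (t - 1)))
    (hv : ∀ t : ℕ, 1 ≤ t →
      v t = v (t - 1) -
        η • gradient (fun u => (∑ j, D j * F j u) / (∑ j, D j)) (v (t - 1))) :
    ∀ t : ℕ,
      ‖(1 / ∑ j, D j) • (∑ j, D j • w j t) - v t‖ ≤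
        ((∑ j, D j * δi j) / (∑ j, D j)) / β * ((η * β + 1) ^ t - 1) -
          η * ((∑ j, D j * δi j) / (∑ j, D j)) * t :=
  averaged_iterate_gap_bound_general hN F D δi η β hη hβ hD hdiff hsmooth hdiv w v h0 hw hv
end

section
/- Under the same setup (common start w_i(0) = v(0), local updates w_i(t) = w_i(t−1) − η∇F_i(w_i(t−1)), averaged iterate w(t) = (∑_i D_i w_i(t))/D, centralized iterate v(t) = v(t−1) − η∇F(v(t−1)), with each F_i β-smooth and local gradient divergences δ_i bounding ‖∇F_i − ∇F‖), for every integer t ≥ 1 the one-step growth of the gap satisfies ‖w(t) − v(t)‖ − ‖w(t−1) − v(t−1)‖ ≤ ηδ((ηβ+1)^{t−1} − 1), where δ = (∑_i D_i δ_i)/D. -/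
/-!
Since `∇F = D⁻¹ ∑ D_j ∇F_j`, one step moves the gap between the averaged and the centralized
iterate by `η D⁻¹ ∑ D_j (∇F_j(w_j) - ∇F_j(v))`, which by smoothness is at most
`η D⁻¹ ∑ D_j β ‖w_j - v‖`. Each client gap `‖w_j - v‖` grows at most by the factor `1 + ηβ`
plus `ηδ_j` per step, so a discrete Grönwall argument bounds it by `(δ_j/β)((ηβ+1)^t - 1)`.
-/

open Finset

theorem le_mul_pow_sub_one_of_le_mul_add {a : ℕ → ℝ} {q K : ℝ} (hq : 0 ≤ q) (ha0 : a 0 ≤ 0)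
    (ha : ∀ t, a (t + 1) ≤ q * a t + (q - 1) * K) (t : ℕ) : a t ≤ K * (q ^ t - 1) := by
  induction t with
  | zero => simpa using ha0
  | succ t ih =>
    calc a (t + 1) ≤ q * a t + (q - 1) * K := ha t
      _ ≤ q * (K * (q ^ t - 1)) + (q - 1) * K := by gcongr
      _ = K * (q ^ (t + 1) - 1) := by ring

section GradientDescent

variable {E : Type*} [SeminormedAddCommGroup E] [NormedSpace ℝ E]

theorem norm_gradientStep_sub_le {g h : E → E} {η β δ : ℝ} (hη : 0 ≤ η)
    (hg : ∀ x y, ‖g x - g y‖ ≤ β * ‖x - y‖) (hgh : ∀ y, ‖g y - h y‖ ≤ δ) (x y : E) :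
    ‖(x - η • g x) - (y - η • h y)‖ ≤ (η * β + 1) * ‖x - y‖ + η * δ := by
  have hsplit : (x - η • g x) - (y - η • h y) = (x - y) - η • (g x - g y) - η • (g y - h y) := by
    module
  rw [hsplit]
  refine (norm_sub_le _ _).trans ?_
  grw [norm_sub_le, norm_smul, norm_smul, Real.norm_of_nonneg hη, hg, hgh]
  linarith

theorem norm_gradientDescent_sub_le {g h : E → E} {x y : ℕ → E} {η β δ : ℝ} (hη : 0 ≤ η)
    (hβ : 0 < β) (hg : ∀ a b, ‖g a - g b‖ ≤ β * ‖a - b‖) (hgh : ∀ a, ‖g a - h a‖ ≤ δ)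
    (hx : ∀ t, x (t + 1) = x t - η • g (x t)) (hy : ∀ t, y (t + 1) = y t - η • h (y t))
    (h0 : x 0 = y 0) (t : ℕ) : ‖x t - y t‖ ≤ δ / β * ((η * β + 1) ^ t - 1) := by
  refine le_mul_pow_sub_one_of_le_mul_add (a := fun t => ‖x t - y t‖) (by positivity)
    (by simp [h0]) (fun t => ?_) t
  have hconst : (η * β + 1 - 1) * (δ / β) = η * δ := by field_simp; ring
  rw [hconst, hx, hy]
  exact norm_gradientStep_sub_le hη hg hgh _ _

variable {ι : Type*} [Fintype ι]

theorem norm_weightedAvg_gradientStep_sub_le {D : ι → ℝ} (hD : ∀ j, 0 ≤ D j) {c η : ℝ}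
    (hc : 0 ≤ c) (hη : 0 ≤ η) (w a b : ι → E) (v : E) :
    ‖c • ∑ j, D j • (w j - η • a j) - (v - η • c • ∑ j, D j • b j)‖ ≤
      ‖c • ∑ j, D j • w j - v‖ + η * c * ∑ j, D j * ‖a j - b j‖ := by
  have hsplit : c • ∑ j, D j • (w j - η • a j) - (v - η • c • ∑ j, D j • b j) =
      (c • ∑ j, D j • w j - v) - (η * c) • ∑ j, D j • (a j - b j) := by
    have hw : ∑ j, D j • (w j - η • a j) = ∑ j, D j • w j - η • ∑ j, D j • a j := by
      simp only [smul_sub, sum_sub_distrib, smul_sum, smul_comm (D _) η]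
    rw [hw]
    simp only [smul_sub, sum_sub_distrib]
    module
  rw [hsplit]
  refine (norm_sub_le _ _).trans (add_le_add_right ?_ _)
  rw [norm_smul, Real.norm_of_nonneg (by positivity)]
  gcongr
  refine (norm_sum_le _ _).trans_eq (sum_congr rfl fun j _ => ?_)
  rw [norm_smul, Real.norm_of_nonneg (hD j)]

end GradientDescent

theorem gradient_sum_const_mul_div {E ι : Type*} [NormedAddCommGroup E] [InnerProductSpace ℝ E]
    [CompleteSpace E] [Fintype ι] {f : ι → E → ℝ} {x : E} (hf : ∀ j, DifferentiableAt ℝ (f j) x)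
    (D : ι → ℝ) (S : ℝ) :
    gradient (fun u => (∑ j, D j * f j u) / S) x = S⁻¹ • ∑ j, D j • gradient (f j) x := by
  refine HasGradientAt.gradient ?_
  rw [hasGradientAt_iff_hasFDerivAt, map_smul, map_sum]
  have hsum := HasFDerivAt.fun_sum fun j (_ : j ∈ univ) => (hf j).hasFDerivAt.const_mul (D j)
  simpa [div_eq_inv_mul, map_smul, toDual_gradient] using hsum.const_mul S⁻¹

theorem averaged_iterate_gap_one_step_growth_general
    {E : Type*} [NormedAddCommGroup E] [InnerProductSpace ℝ E] [CompleteSpace E]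
    {N : ℕ}
    (F : Fin N → E → ℝ) (D : Fin N → ℝ) (δi : Fin N → ℝ) (η β : ℝ)
    (hη : 0 < η) (hβ : 0 < β)
    (hD : ∀ i, 0 < D i)
    (hdiff : ∀ i, Differentiable ℝ (F i))
    (hsmooth : ∀ i, ∀ x x' : E,
      ‖gradient (F i) x - gradient (F i) x'‖ ≤ β * ‖x - x'‖)
    (hdiv : ∀ i, ∀ x : E,
      ‖gradient (F i) x -
        gradient (fun u => (∑ j, D j * F j u) / (∑ j, D j)) x‖ ≤ δi i)
    (w : Fin N → ℕ → E) (v : ℕ → E)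
    (h0 : ∀ i, w i 0 = v 0)
    (hw : ∀ i, ∀ t : ℕ, 1 ≤ t →
      w i t = w i (t - 1) - η • gradient (F i) (w i (t - 1)))
    (hv : ∀ t : ℕ, 1 ≤ t →
      v t = v (t - 1) -
        η • gradient (fun u => (∑ j, D j * F j u) / (∑ j, D j)) (v (t - 1))) :
    ∀ t : ℕ, 1 ≤ t →
      ‖(1 / ∑ j, D j) • (∑ j, D j • w j t) - v t‖ -
          ‖(1 / ∑ j, D j) • (∑ j, D j • w j (t - 1)) - v (t - 1)‖ ≤
        η * ((∑ j, D j * δi j) / (∑ j, D j)) * ((η * β + 1) ^ (t - 1) - 1) := by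
  intro t ht
  obtain ⟨s, rfl⟩ : ∃ s, t = s + 1 := ⟨t - 1, by omega⟩
  set S := ∑ j, D j
  have hS : 0 ≤ S := sum_nonneg fun j _ => (hD j).le
  have hgradF : ∀ x, gradient (fun u => (∑ j, D j * F j u) / S) x =
      (1 / S) • ∑ j, D j • gradient (F j) x := fun x => by
    rw [one_div]; exact gradient_sum_const_mul_div (fun j => hdiff j x) D S
  have hgap : ∀ j, ‖w j s - v s‖ ≤ δi j / β * ((η * β + 1) ^ s - 1) := fun j =>
    norm_gradientDescent_sub_le hη.le hβ (hsmooth j) (hdiv j) (fun t => hw j (t + 1) le_add_self)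
      (fun t => hv (t + 1) le_add_self) (h0 j) s
  have hgrad_gap : ∀ j, D j * ‖gradient (F j) (w j s) - gradient (F j) (v s)‖ ≤
      D j * δi j * ((η * β + 1) ^ s - 1) := fun j => by
    have hDj := (hD j).le
    grw [hsmooth j, hgap j]
    exact le_of_eq (by field_simp)
  rw [Nat.add_sub_cancel, hv (s + 1) le_add_self, Nat.add_sub_cancel, hgradF]
  simp only [hw _ (s + 1) le_add_self, Nat.add_sub_cancel]
  grw [norm_weightedAvg_gradientStep_sub_le (fun j => (hD j).le) (one_div_nonneg.mpr hS) hη.le,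
    sum_le_sum fun j _ => hgrad_gap j, ← sum_mul]
  exact le_of_eq (by ring)

/-- Under the same setup (common start, local updates
`w_i(t) = w_i(t-1) - η • ∇F_i(w_i(t-1))`, averaged iterate `w(t) = (∑ i, D i • w_i(t))/D`,
centralized iterate `v(t) = v(t-1) - η • ∇F(v(t-1))`, each `F_i` β-smooth and the local
gradient divergences bounded by `δ_i`), for every `t ≥ 1` the one-step growth of the gap
satisfies `‖w(t) - v(t)‖ - ‖w(t-1) - v(t-1)‖ ≤ ηδ((ηβ+1)^{t-1} - 1)` where
`δ = (∑ i, D i * δ_i)/D`. -/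
theorem averaged_iterate_gap_one_step_growth
    {E : Type*} [NormedAddCommGroup E] [InnerProductSpace ℝ E] [CompleteSpace E]
    {N : ℕ} (hN : 0 < N)
    (F : Fin N → E → ℝ) (D : Fin N → ℝ) (δi : Fin N → ℝ) (η β : ℝ)
    (hη : 0 < η) (hβ : 0 < β)
    (hD : ∀ i, 0 < D i) (hδi : ∀ i, 0 ≤ δi i)
    (hdiff : ∀ i, Differentiable ℝ (F i))
    (hsmooth : ∀ i, ∀ x x' : E,
      ‖gradient (F i) x - gradient (F i) x'‖ ≤ β * ‖x - x'‖)
    (hdiv : ∀ i, ∀ x : E,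
      ‖gradient (F i) x -
        gradient (fun u => (∑ j, D j * F j u) / (∑ j, D j)) x‖ ≤ δi i)
    (w : Fin N → ℕ → E) (v : ℕ → E)
    (h0 : ∀ i, w i 0 = v 0)
    (hw : ∀ i, ∀ t : ℕ, 1 ≤ t →
      w i t = w i (t - 1) - η • gradient (F i) (w i (t - 1)))
    (hv : ∀ t : ℕ, 1 ≤ t →
      v t = v (t - 1) -
        η • gradient (fun u => (∑ j, D j * F j u) / (∑ j, D j)) (v (t - 1))) :
    ∀ t : ℕ, 1 ≤ t →
      ‖(1 / ∑ j, D j) • (∑ j, D j • w j t) - v t‖ -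
          ‖(1 / ∑ j, D j) • (∑ j, D j • w j (t - 1)) - v (t - 1)‖ ≤
        η * ((∑ j, D j * δi j) / (∑ j, D j)) * ((η * β + 1) ^ (t - 1) - 1) :=
  averaged_iterate_gap_one_step_growth_general F D δi η β hη hβ hD hdiff hsmooth hdiv w v h0 hw hv
end

section
/- Let F : E → ℝ be convex, differentiable, and β-smooth, let w* be a global minimizer of F, and let 0 < η ≤ 1/β. Then one gradient-descent step does not increase the distance to the minimizer: ‖(v − η∇F(v)) − w*‖ ≤ ‖v − w*‖ for every v ∈ E. -/
/-!
The descent lemma for a `β`-smooth `F` gives `F w* ≤ F (v - β⁻¹ ∇F v) ≤ F v - ‖∇F v‖² / (2β)`,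
and convexity gives `F v - F w* ≤ ⟪∇F v, v - w*⟫`. Hence `⟪∇F v, v - w*⟫ ≥ ‖∇F v‖² / (2β)`, and in
the expansion of `‖(v - w*) - η ∇F v‖²` this cross term outweighs `η² ‖∇F v‖²` once `η ≤ 1/β`.
-/

open InnerProductSpace Set

section Hilbert

variable {E : Type*} [NormedAddCommGroup E] [InnerProductSpace ℝ E]

theorem norm_sub_smul_le_of_inner_ge {d g : E} {c η : ℝ} (hη0 : 0 ≤ η) (hη : η ≤ c)
    (hinner : c / 2 * ‖g‖ ^ 2 ≤ ⟪g, d⟫_ℝ) : ‖d - η • g‖ ≤ ‖d‖ := by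
  have hsq : ‖d - η • g‖ ^ 2 = ‖d‖ ^ 2 - 2 * η * ⟪g, d⟫_ℝ + η ^ 2 * ‖g‖ ^ 2 := by
    rw [norm_sub_sq_real, real_inner_smul_right, real_inner_comm, norm_smul,
      Real.norm_of_nonneg hη0]
    ring
  have hcoeff : η ^ 2 * ‖g‖ ^ 2 ≤ η * c * ‖g‖ ^ 2 := by
    rw [sq η, mul_assoc, mul_assoc]
    gcongr
  refine sq_le_sq₀ (norm_nonneg _) (norm_nonneg _) |>.mp ?_
  nlinarith [mul_le_mul_of_nonneg_left hinner hη0]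

end Hilbert

section Gradient

variable {E : Type*} [NormedAddCommGroup E] [InnerProductSpace ℝ E] [CompleteSpace E]
  {F : E → ℝ} {β : ℝ}

theorem hasDerivAt_comp_add_smul {x u : E} {t : ℝ} (hF : DifferentiableAt ℝ F (x + t • u)) :
    HasDerivAt (fun s : ℝ => F (x + s • u)) ⟪gradient F (x + t • u), u⟫_ℝ t := by
  have hline : HasDerivAt (fun s : ℝ => x + s • u) u t := by
    simpa using ((hasDerivAt_id t).smul_const u).const_add x
  simpa [Function.comp_def] using hF.hasGradientAt.hasFDerivAt.comp_hasDerivAt t hline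

theorem ConvexOn.add_inner_gradient_le (hconv : ConvexOn ℝ univ F) {x : E}
    (hF : DifferentiableAt ℝ F x) (y : E) :
    F x + ⟪gradient F x, y - x⟫_ℝ ≤ F y := by
  have hline : ConvexOn ℝ univ (fun s : ℝ => F (x + s • (y - x))) := by
    simpa [Function.comp_def, AffineMap.lineMap_apply, add_comm] using
      hconv.comp_affineMap (AffineMap.lineMap x y : ℝ →ᵃ[ℝ] E)
  have hderiv := hasDerivAt_comp_add_smul (u := y - x) (t := 0) (by simpa using hF)
  have hslope := hline.le_slope_of_hasDerivAt (mem_univ 0) (mem_univ 1) one_pos hderiv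
  simp only [slope_def_field, zero_smul, add_zero, one_smul, add_sub_cancel, sub_zero,
    div_one] at hslope
  linarith

theorem apply_add_le_add_inner_gradient_add_sq (hF : Differentiable ℝ F)
    (hsmooth : ∀ w w' : E, ‖gradient F w - gradient F w'‖ ≤ β * ‖w - w'‖) (x h : E) :
    F (x + h) ≤ F x + ⟪gradient F x, h⟫_ℝ + β / 2 * ‖h‖ ^ 2 := by
  set ρ : ℝ → ℝ := fun t => F (x + t • h) - t * ⟪gradient F x, h⟫_ℝ - β / 2 * t ^ 2 * ‖h‖ ^ 2
  have hρ : ∀ t, HasDerivAt ρ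
      (⟪gradient F (x + t • h), h⟫_ℝ - ⟪gradient F x, h⟫_ℝ - β * t * ‖h‖ ^ 2) t := by
    intro t
    have hF_line := hasDerivAt_comp_add_smul (x := x) (u := h) (hF (x + t • h))
    have hlin := (hasDerivAt_id t).mul_const ⟪gradient F x, h⟫_ℝ
    have hquad := ((hasDerivAt_pow 2 t).const_mul (β / 2)).mul_const (‖h‖ ^ 2)
    exact ((hF_line.sub hlin).sub hquad).congr_deriv (by push_cast; ring)
  have hρ_nonpos : ∀ t ∈ interior (Ici (0 : ℝ)),
      ⟪gradient F (x + t • h), h⟫_ℝ - ⟪gradient F x, h⟫_ℝ - β * t * ‖h‖ ^ 2 ≤ 0 := by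
    intro t ht
    rw [interior_Ici, mem_Ioi] at ht
    have hle : ⟪gradient F (x + t • h), h⟫_ℝ - ⟪gradient F x, h⟫_ℝ ≤ β * t * ‖h‖ ^ 2 := calc
      ⟪gradient F (x + t • h), h⟫_ℝ - ⟪gradient F x, h⟫_ℝ
        = ⟪gradient F (x + t • h) - gradient F x, h⟫_ℝ := (inner_sub_left _ _ _).symm
      _ ≤ ‖gradient F (x + t • h) - gradient F x‖ * ‖h‖ := real_inner_le_norm _ _
      _ ≤ β * ‖(x + t • h) - x‖ * ‖h‖ := by gcongr; exact hsmooth _ _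
      _ = β * t * ‖h‖ ^ 2 := by
          rw [add_sub_cancel_left, norm_smul, Real.norm_of_nonneg ht.le]; ring
    linarith
  have hρ_antitone := antitoneOn_of_hasDerivWithinAt_nonpos (convex_Ici 0)
    (fun t _ => (hρ t).continuousAt.continuousWithinAt)
    (fun t _ => (hρ t).hasDerivWithinAt) hρ_nonpos
    self_mem_Ici (mem_Ici.mpr zero_le_one) zero_le_one
  simp only [ρ, one_smul, zero_smul, add_zero, one_mul, zero_mul, one_pow, mul_one,
    zero_pow two_ne_zero, mul_zero, sub_zero] at hρ_antitone
  linarith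

theorem apply_sub_inv_smul_gradient_le (hF : Differentiable ℝ F)
    (hsmooth : ∀ w w' : E, ‖gradient F w - gradient F w'‖ ≤ β * ‖w - w'‖) (x : E) :
    F (x - β⁻¹ • gradient F x) ≤ F x - β⁻¹ / 2 * ‖gradient F x‖ ^ 2 := by
  have hdescent := apply_add_le_add_inner_gradient_add_sq hF hsmooth x (-(β⁻¹ • gradient F x))
  rw [← sub_eq_add_neg, inner_neg_right, real_inner_smul_right, real_inner_self_eq_norm_sq,
    norm_neg, norm_smul, Real.norm_eq_abs, mul_pow, sq_abs] at hdescent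
  have hcoeff : β * β⁻¹ ^ 2 = β⁻¹ := by
    rcases eq_or_ne β 0 with rfl | hβ <;> field_simp
  linear_combination hdescent + (‖gradient F x‖ ^ 2 / 2) * hcoeff

theorem ConvexOn.inv_div_two_mul_sq_norm_gradient_le_inner (hconv : ConvexOn ℝ univ F)
    (hF : Differentiable ℝ F)
    (hsmooth : ∀ w w' : E, ‖gradient F w - gradient F w'‖ ≤ β * ‖w - w'‖)
    {wstar : E} (hmin : ∀ w, F wstar ≤ F w) (v : E) :
    β⁻¹ / 2 * ‖gradient F v‖ ^ 2 ≤ ⟪gradient F v, v - wstar⟫_ℝ := by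
  have hdecrease := apply_sub_inv_smul_gradient_le hF hsmooth v
  have hfirst_order := hconv.add_inner_gradient_le (hF v) wstar
  have hflip : ⟪gradient F v, wstar - v⟫_ℝ = -⟪gradient F v, v - wstar⟫_ℝ := by
    rw [← inner_neg_right, neg_sub]
  linarith [hmin (v - β⁻¹ • gradient F v)]

end Gradient

theorem gradient_step_dist_to_min_nonincreasing_general
    {E : Type*} [NormedAddCommGroup E] [InnerProductSpace ℝ E] [CompleteSpace E]
    (F : E → ℝ) (β η : ℝ) (wstar : E)
    (hη0 : 0 < η) (hη : η ≤ 1 / β)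
    (hdiff : Differentiable ℝ F)
    (hconv : ConvexOn ℝ Set.univ F)
    (hsmooth : ∀ w w' : E, ‖gradient F w - gradient F w'‖ ≤ β * ‖w - w'‖)
    (hstar : ∀ w : E, F wstar ≤ F w) :
    ∀ v : E, ‖(v - η • gradient F v) - wstar‖ ≤ ‖v - wstar‖ := by
  intro v
  rw [sub_right_comm]
  exact norm_sub_smul_le_of_inner_ge hη0.le (one_div β ▸ hη)
    (hconv.inv_div_two_mul_sq_norm_gradient_le_inner hdiff hsmooth hstar v)

/-- Lemma: distance to minimizer non-increasing: Let `F : E → ℝ` be convex,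
differentiable, and β-smooth, let `w*` be a global minimizer of `F`, and let
`0 < η ≤ 1/β`.  Then one gradient-descent step does not increase the distance to the
minimizer: `‖(v - η • ∇F(v)) - w*‖ ≤ ‖v - w*‖` for every `v`. -/
theorem gradient_step_dist_to_min_nonincreasing
    {E : Type*} [NormedAddCommGroup E] [InnerProductSpace ℝ E] [CompleteSpace E]
    (F : E → ℝ) (β η : ℝ) (wstar : E)
    (hβ : 0 < β) (hη0 : 0 < η) (hη : η ≤ 1 / β)
    (hdiff : Differentiable ℝ F)
    (hconv : ConvexOn ℝ Set.univ F)
    (hsmooth : ∀ w w' : E, ‖gradient F w - gradient F w'‖ ≤ β * ‖w - w'‖)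
    (hstar : ∀ w : E, F wstar ≤ F w) :
    ∀ v : E, ‖(v - η • gradient F v) - wstar‖ ≤ ‖v - wstar‖ :=
  gradient_step_dist_to_min_nonincreasing_general F β η wstar hη0 hη hdiff hconv hsmooth hstar
end

section
/- Let F : E → ℝ be convex, differentiable, and β-smooth, let w* be a global minimizer of F, and let 0 < η ≤ 1/β. If v ∈ E satisfies v ≠ w* and θ := F(v) − F(w*) > 0, then the point v' = v − η∇F(v) satisfies F(v') − F(w*) ≤ θ − η(1 − βη/2)·θ²/‖v − w*‖². -/
/-! By the descent lemma, β-smoothness makes the gradient step decrease `F` by at least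
`η (1 - βη/2) ‖∇F v‖²`, a nonnegative multiple of `‖∇F v‖²` once `βη ≤ 1`. Convexity gives
`F v - F w* ≤ ⟪∇F v, v - w*⟫ ≤ ‖∇F v‖ ‖v - w*‖`, so `‖∇F v‖² ≥ θ² / ‖v - w*‖²`. -/

open RealInnerProductSpace

section

variable {E : Type*} [NormedAddCommGroup E] [InnerProductSpace ℝ E] [CompleteSpace E]
  {F : E → ℝ} {β : ℝ}

theorem hasDerivAt_apply_add_smul {x u : E} {t : ℝ} (hF : DifferentiableAt ℝ F (x + t • u)) :
    HasDerivAt (fun s : ℝ => F (x + s • u)) ⟪gradient F (x + t • u), u⟫ t := by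
  have hline : HasDerivAt (fun s : ℝ => x + s • u) u t :=
    ((hasDerivAt_id t).smul_const u).const_add x |>.congr_deriv (one_smul ℝ u)
  exact hF.hasGradientAt.hasFDerivAt.comp_hasDerivAt t hline

theorem ConvexOn.apply_add_inner_gradient_le (hconv : ConvexOn ℝ Set.univ F) {x : E}
    (hF : DifferentiableAt ℝ F x) (y : E) :
    F x + ⟪gradient F x, y - x⟫ ≤ F y := by
  have hline : ConvexOn ℝ Set.univ fun t : ℝ => F (x + t • (y - x)) := by
    simpa [Function.comp_def, AffineMap.lineMap_apply, add_comm] using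
      hconv.comp_affineMap (AffineMap.lineMap x y : ℝ →ᵃ[ℝ] E)
  have hderiv := hasDerivAt_apply_add_smul (x := x) (u := y - x) (t := 0) (by simpa using hF)
  have hslope := hline.le_slope_of_hasDerivAt (Set.mem_univ 0) (Set.mem_univ 1) one_pos hderiv
  simp only [slope_def_field, zero_smul, add_zero, one_smul, add_sub_cancel] at hslope
  linarith

theorem ConvexOn.sub_le_norm_gradient_mul_norm_sub (hconv : ConvexOn ℝ Set.univ F) {v : E}
    (hF : DifferentiableAt ℝ F v) (u : E) :
    F v - F u ≤ ‖gradient F v‖ * ‖v - u‖ :=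
  calc F v - F u ≤ ⟪gradient F v, v - u⟫ := by
        have := hconv.apply_add_inner_gradient_le hF u
        rw [← neg_sub, inner_neg_right] at this
        linarith
    _ ≤ ‖gradient F v‖ * ‖v - u‖ := real_inner_le_norm _ _

theorem ConvexOn.sq_sub_div_norm_sq_le_norm_gradient_sq (hconv : ConvexOn ℝ Set.univ F) {v u : E}
    (hF : DifferentiableAt ℝ F v) (hgap : 0 ≤ F v - F u) :
    (F v - F u) ^ 2 / ‖v - u‖ ^ 2 ≤ ‖gradient F v‖ ^ 2 := by
  rcases (norm_nonneg (v - u)).eq_or_lt with hvu | hvu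
  · simp [← hvu]
  rw [div_le_iff₀ (by positivity), ← mul_pow]
  exact pow_le_pow_left₀ hgap (hconv.sub_le_norm_gradient_mul_norm_sub hF u) 2

theorem inner_gradient_add_smul_sub_le
    (hsmooth : ∀ w w' : E, ‖gradient F w - gradient F w'‖ ≤ β * ‖w - w'‖)
    (x u : E) {t : ℝ} (ht : 0 ≤ t) :
    ⟪gradient F (x + t • u) - gradient F x, u⟫ ≤ β * t * ‖u‖ ^ 2 :=
  calc ⟪gradient F (x + t • u) - gradient F x, u⟫
      ≤ ‖gradient F (x + t • u) - gradient F x‖ * ‖u‖ := real_inner_le_norm _ _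
    _ ≤ β * ‖t • u‖ * ‖u‖ := by
        gcongr
        simpa using hsmooth (x + t • u) x
    _ = β * t * ‖u‖ ^ 2 := by
        rw [norm_smul, Real.norm_of_nonneg ht]
        ring

theorem apply_add_le_of_lipschitz_gradient (hdiff : Differentiable ℝ F)
    (hsmooth : ∀ w w' : E, ‖gradient F w - gradient F w'‖ ≤ β * ‖w - w'‖) (x u : E) :
    F (x + u) ≤ F x + ⟪gradient F x, u⟫ + β / 2 * ‖u‖ ^ 2 := by
  set c := ⟪gradient F x, u⟫
  let slack : ℝ → ℝ := fun t => β / 2 * t ^ 2 * ‖u‖ ^ 2 + t * c - F (x + t • u)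
  have hderiv (t : ℝ) :
      HasDerivAt slack (β * t * ‖u‖ ^ 2 + c - ⟪gradient F (x + t • u), u⟫) t := by
    have hquad : HasDerivAt (fun s : ℝ => β / 2 * s ^ 2 * ‖u‖ ^ 2) (β * t * ‖u‖ ^ 2) t := by
      refine (((hasDerivAt_pow 2 t).const_mul (β / 2)).mul_const (‖u‖ ^ 2)).congr_deriv ?_
      simp only [Nat.cast_ofNat, Nat.add_one_sub_one, pow_one]
      ring
    exact (hquad.add ((hasDerivAt_id t).mul_const c |>.congr_deriv (one_mul c))).sub
      (hasDerivAt_apply_add_smul (hdiff _))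
  have hmono : MonotoneOn slack (Set.Ici 0) := by
    refine monotoneOn_of_hasDerivWithinAt_nonneg (convex_Ici 0)
      (fun t _ => (hderiv t).continuousAt.continuousWithinAt)
      (fun t _ => (hderiv t).hasDerivWithinAt) fun t ht => ?_
    rw [interior_Ici] at ht
    have := inner_gradient_add_smul_sub_le hsmooth x u (le_of_lt ht)
    rw [inner_sub_left] at this
    linarith
  have := hmono Set.self_mem_Ici (zero_le_one' ℝ) zero_le_one
  simp only [slack, zero_smul, add_zero, one_smul, one_pow, mul_one, one_mul] at this
  linarith

theorem apply_sub_smul_gradient_le (hdiff : Differentiable ℝ F)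
    (hsmooth : ∀ w w' : E, ‖gradient F w - gradient F w'‖ ≤ β * ‖w - w'‖) (v : E) (η : ℝ) :
    F (v - η • gradient F v) ≤ F v - η * (1 - β * η / 2) * ‖gradient F v‖ ^ 2 :=
  calc F (v - η • gradient F v)
      ≤ F v + ⟪gradient F v, -(η • gradient F v)⟫ + β / 2 * ‖-(η • gradient F v)‖ ^ 2 := by
        rw [sub_eq_add_neg]
        exact apply_add_le_of_lipschitz_gradient hdiff hsmooth v _
    _ = F v - η * (1 - β * η / 2) * ‖gradient F v‖ ^ 2 := by
        rw [inner_neg_right, real_inner_smul_right, real_inner_self_eq_norm_sq, norm_neg,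
          norm_smul, Real.norm_eq_abs, mul_pow, sq_abs]
        ring

end

theorem gradient_step_gap_recursion_general
    {E : Type*} [NormedAddCommGroup E] [InnerProductSpace ℝ E] [CompleteSpace E]
    (F : E → ℝ) (β η : ℝ) (wstar : E)
    (hη0 : 0 < η) (hη : η ≤ 1 / β)
    (hdiff : Differentiable ℝ F)
    (hconv : ConvexOn ℝ Set.univ F)
    (hsmooth : ∀ w w' : E, ‖gradient F w - gradient F w'‖ ≤ β * ‖w - w'‖)
    (v : E) (hθ : 0 < F v - F wstar) :
    F (v - η • gradient F v) - F wstar ≤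
      (F v - F wstar) -
        η * (1 - β * η / 2) * (F v - F wstar) ^ 2 / ‖v - wstar‖ ^ 2 := by
  have hβη : β * η ≤ 1 := by
    have hβ : 0 < β := one_div_pos.mp (hη0.trans_le hη)
    calc β * η ≤ β * (1 / β) := by gcongr
      _ = 1 := mul_one_div_cancel hβ.ne'
  have hrate : 0 ≤ η * (1 - β * η / 2) := mul_nonneg hη0.le (by linarith)
  have hgrad := hconv.sq_sub_div_norm_sq_le_norm_gradient_sq (hdiff v) hθ.le
  calc F (v - η • gradient F v) - F wstar
      ≤ (F v - F wstar) - η * (1 - β * η / 2) * ‖gradient F v‖ ^ 2 := by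
        linarith [apply_sub_smul_gradient_le hdiff hsmooth v η]
    _ ≤ (F v - F wstar) - η * (1 - β * η / 2) * ((F v - F wstar) ^ 2 / ‖v - wstar‖ ^ 2) := by
        gcongr
    _ = _ := by ring

/-- one-step optimality-gap recursion: Let `F : E → ℝ` be convex,
differentiable, and β-smooth, let `w*` be a global minimizer of `F`, and let
`0 < η ≤ 1/β`.  If `v ≠ w*` and `θ := F(v) - F(w*) > 0`, then the next iterate
`v' = v - η • ∇F(v)` satisfies
`F(v') - F(w*) ≤ θ - η(1 - βη/2)·θ²/‖v - w*‖²`. -/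
theorem gradient_step_gap_recursion
    {E : Type*} [NormedAddCommGroup E] [InnerProductSpace ℝ E] [CompleteSpace E]
    (F : E → ℝ) (β η : ℝ) (wstar : E)
    (hβ : 0 < β) (hη0 : 0 < η) (hη : η ≤ 1 / β)
    (hdiff : Differentiable ℝ F)
    (hconv : ConvexOn ℝ Set.univ F)
    (hsmooth : ∀ w w' : E, ‖gradient F w - gradient F w'‖ ≤ β * ‖w - w'‖)
    (hstar : ∀ w : E, F wstar ≤ F w)
    (v : E) (hne : v ≠ wstar) (hθ : 0 < F v - F wstar) :
    F (v - η • gradient F v) - F wstar ≤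
      (F v - F wstar) -
        η * (1 - β * η / 2) * (F v - F wstar) ^ 2 / ‖v - wstar‖ ^ 2 :=
  gradient_step_gap_recursion_general F β η wstar hη0 hη hdiff hconv hsmooth v hθ
end

section
/- Let η, β, ρ, δ, φ > 0 with ηβ ≤ 1, and define h(x) = (δ/β)((ηβ+1)^x − 1) − ηδx and Ḡ(τ) = √(ρh(τ)/(ηφτ)) + ρh(τ). Then Ḡ, restricted to positive integers, attains its minimum uniquely at τ = 1; that is, Ḡ(1) = 0 and Ḡ(1) < Ḡ(τ) for every integer τ ≥ 2. (This is the infinite-resource-budget limit of the control objective G(τ), so the optimal aggregation period tends to 1 as the resource budget grows.) -/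
/-- The gap function `h(x) = (δ/β)((ηβ+1)^x - 1) - ηδx` for natural `x`. -/
noncomputable def hGap (η β δ : ℝ) (x : ℕ) : ℝ :=
  δ / β * ((η * β + 1) ^ x - 1) - η * δ * x

/-- The infinite-resource-budget limit of the control objective:
`Ḡ(τ) = √(ρh(τ)/(ηφτ)) + ρh(τ)`. -/
noncomputable def GbarObj (η β ρ δ φ : ℝ) (τ : ℕ) : ℝ :=
  Real.sqrt (ρ * hGap η β δ τ / (η * φ * τ)) + ρ * hGap η β δ τ

/-! With `a = ηβ`, `h(τ) = (δ/β)((1 + a)^τ - (1 + τa))` is `δ/β` times the gap in Bernoulli's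
inequality, which vanishes at `τ = 1` and is strictly positive for `τ ≥ 2` when `a > 0`.
Hence `Ḡ(1) = 0`, while for `τ ≥ 2` already the summand `ρh(τ)` of `Ḡ(τ)` is positive. -/

theorem one_add_mul_lt_pow {a : ℝ} (ha : -1 ≤ a) (ha₀ : a ≠ 0) {n : ℕ} (hn : 2 ≤ n) :
    1 + n * a < (1 + a) ^ n := by
  have hn' : (1 : ℝ) < n := by exact_mod_cast hn
  simpa only [Real.rpow_natCast] using one_add_mul_self_lt_rpow_one_add ha ha₀ hn'

section

variable {η β ρ δ φ : ℝ}

theorem hGap_eq_mul_bernoulli_gap (hβ : β ≠ 0) (x : ℕ) :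
    hGap η β δ x = δ / β * ((1 + η * β) ^ x - (1 + x * (η * β))) := by
  unfold hGap
  field_simp
  ring

theorem hGap_one (hβ : β ≠ 0) : hGap η β δ 1 = 0 := by
  simp [hGap_eq_mul_bernoulli_gap hβ]

theorem hGap_pos (hη : 0 < η) (hβ : 0 < β) (hδ : 0 < δ) {τ : ℕ} (hτ : 2 ≤ τ) :
    0 < hGap η β δ τ := by
  have hηβ : 0 < η * β := mul_pos hη hβ
  rw [hGap_eq_mul_bernoulli_gap hβ.ne']
  exact mul_pos (div_pos hδ hβ)
    (sub_pos.mpr (one_add_mul_lt_pow (by linarith) hηβ.ne' hτ))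

theorem GbarObj_one (hβ : β ≠ 0) : GbarObj η β ρ δ φ 1 = 0 := by
  simp [GbarObj, hGap_one hβ]

theorem mul_hGap_le_GbarObj (τ : ℕ) : ρ * hGap η β δ τ ≤ GbarObj η β ρ δ φ τ :=
  le_add_of_nonneg_left (Real.sqrt_nonneg _)

end

theorem Gbar_min_at_one_general
    (η β ρ δ φ : ℝ)
    (hη : 0 < η) (hβ : 0 < β) (hρ : 0 < ρ) (hδ : 0 < δ) :
    GbarObj η β ρ δ φ 1 = 0 ∧
    ∀ τ : ℕ, 2 ≤ τ → GbarObj η β ρ δ φ 1 < GbarObj η β ρ δ φ τ := by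
  refine ⟨GbarObj_one hβ.ne', fun τ hτ => ?_⟩
  rw [GbarObj_one hβ.ne']
  exact (mul_pos hρ (hGap_pos hη hβ hδ hτ)).trans_le (mul_hGap_le_GbarObj τ)

/-- with `η, β, ρ, δ, φ > 0` and `ηβ ≤ 1`, the function `Ḡ`, restricted to
positive integers, attains its minimum uniquely at `τ = 1`: `Ḡ(1) = 0` and
`Ḡ(1) < Ḡ(τ)` for every integer `τ ≥ 2`. -/
theorem Gbar_min_at_one
    (η β ρ δ φ : ℝ)
    (hη : 0 < η) (hβ : 0 < β) (hρ : 0 < ρ) (hδ : 0 < δ) (hφ : 0 < φ)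
    (hηβ : η * β ≤ 1) :
    GbarObj η β ρ δ φ 1 = 0 ∧
    ∀ τ : ℕ, 2 ≤ τ → GbarObj η β ρ δ φ 1 < GbarObj η β ρ δ φ τ :=
  Gbar_min_at_one_general η β ρ δ φ hη hβ hρ hδ
end

section
/- Let c ≥ 0, b ≥ 0, C₁ > 0, and ρ, δ, η, β > 0 with ηβ ≤ 1, and set B = ηβ + 1. Define H₁(τ) = c/C₁ + b/(C₁τ) + ρδ(B^τ − 1)/β − ρηδτ for real τ > 0. Then H₁ is strictly increasing on (τ₁, ∞), where τ₁ = max{1, (1/(ρδη log B))·(b/C₁ + ρηδ) − 1/(ηβ)}. -/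
/-!
For `τ ≥ 1` the derivative `H₁'(τ) = -b/(C₁τ²) + (ρδ/β) log B · B^τ - ρηδ` is bounded below by
replacing `b/(C₁τ²)` with `b/C₁` and `B^τ` with its Bernoulli lower bound `1 + τηβ`. The resulting
affine function `ρδ log B (1/β + ητ) - b/C₁ - ρηδ` of `τ` is positive exactly when `τ` exceeds the
second entry of the maximum defining `τ₁`.
-/

open Real Set

theorem strictMonoOn_Ioi_of_hasDerivAt_pos {f f' : ℝ → ℝ} {a : ℝ}
    (hf : ∀ x ∈ Ioi a, HasDerivAt f (f' x) x) (hf' : ∀ x ∈ Ioi a, 0 < f' x) :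
    StrictMonoOn f (Ioi a) := by
  refine strictMonoOn_of_hasDerivWithinAt_pos (f' := f') (convex_Ioi a)
    (fun x hx => (hf x hx).continuousAt.continuousWithinAt) ?_ ?_ <;> rw [interior_Ioi]
  · exact fun x hx => (hf x hx).hasDerivWithinAt
  · exact hf'

theorem log_mul_one_add_mul_le_log_mul_rpow {s τ : ℝ} (hs : 0 ≤ s) (hτ : 1 ≤ τ) :
    log (s + 1) * (1 + τ * s) ≤ log (s + 1) * (s + 1) ^ τ := by
  have hbernoulli : 1 + τ * s ≤ (s + 1) ^ τ := by
    simpa only [add_comm s 1] using one_add_mul_self_le_rpow_one_add (by linarith) hτ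
  exact mul_le_mul_of_nonneg_left hbernoulli (log_nonneg (by linarith))

section H₁

variable (c b C₁ ρ δ η β : ℝ)

noncomputable def H₁ (τ : ℝ) : ℝ :=
  c / C₁ + b / (C₁ * τ) + ρ * δ * ((η * β + 1) ^ τ - 1) / β - ρ * η * δ * τ

noncomputable def H₁Deriv (τ : ℝ) : ℝ :=
  -(b / (C₁ * τ ^ 2)) + ρ * δ / β * (log (η * β + 1) * (η * β + 1) ^ τ) - ρ * η * δ

variable {c b C₁ ρ δ η β}

theorem hasDerivAt_H₁ {τ : ℝ} (hC₁ : C₁ ≠ 0) (hτ : τ ≠ 0) (hB : 0 < η * β + 1) :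
    HasDerivAt (H₁ c b C₁ ρ δ η β) (H₁Deriv b C₁ ρ δ η β τ) τ := by
  have hrecip : HasDerivAt (fun τ => b / (C₁ * τ)) (-(b / (C₁ * τ ^ 2))) τ := by
    have hfun : (fun τ => b / (C₁ * τ)) = fun τ => b / C₁ * τ⁻¹ := by
      funext τ
      rw [div_mul_eq_div_div, div_eq_mul_inv]
    rw [hfun]
    exact ((hasDerivAt_inv hτ).const_mul (b / C₁)).congr_deriv (by field_simp)
  have hexp : HasDerivAt (fun τ => ρ * δ * ((η * β + 1) ^ τ - 1) / β)
      (ρ * δ / β * (log (η * β + 1) * (η * β + 1) ^ τ)) τ :=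
    ((((hasStrictDerivAt_const_rpow hB τ).hasDerivAt.sub_const 1).const_mul
      (ρ * δ)).div_const β).congr_deriv (by ring)
  exact ((((hasDerivAt_const τ (c / C₁)).add hrecip).add hexp).sub
    ((hasDerivAt_id τ).const_mul (ρ * η * δ))).congr_deriv (by rw [H₁Deriv]; ring)

theorem affine_le_H₁Deriv (hb : 0 ≤ b) (hC₁ : 0 < C₁) (hρδ : 0 ≤ ρ * δ) (hη : 0 ≤ η)
    (hβ : 0 < β) {τ : ℝ} (hτ : 1 ≤ τ) :
    ρ * δ * log (η * β + 1) * (1 / β + η * τ) - b / C₁ - ρ * η * δ ≤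
      H₁Deriv b C₁ ρ δ η β τ := by
  have hrecip : b / (C₁ * τ ^ 2) ≤ b / C₁ :=
    div_le_div_of_nonneg_left hb hC₁ (le_mul_of_one_le_right hC₁.le (one_le_pow₀ hτ))
  have hexp := mul_le_mul_of_nonneg_left
    (log_mul_one_add_mul_le_log_mul_rpow (mul_nonneg hη hβ.le) hτ) (div_nonneg hρδ hβ.le)
  have hrewrite : ρ * δ * log (η * β + 1) * (1 / β + η * τ) =
      ρ * δ / β * (log (η * β + 1) * (1 + τ * (η * β))) := by
    field_simp
  unfold H₁Deriv
  linarith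

theorem H₁Deriv_pos (hb : 0 ≤ b) (hC₁ : 0 < C₁) (hρ : 0 < ρ) (hδ : 0 < δ) (hη : 0 < η)
    (hβ : 0 < β) {τ : ℝ} (hτ₁ : 1 ≤ τ)
    (hτ : 1 / (ρ * δ * η * log (η * β + 1)) * (b / C₁ + ρ * η * δ) - 1 / (η * β) < τ) :
    0 < H₁Deriv b C₁ ρ δ η β τ := by
  have hK : 0 < ρ * δ * η * log (η * β + 1) :=
    mul_pos (by positivity) (log_pos (by linarith [mul_pos hη hβ]))
  have haffine : b / C₁ + ρ * η * δ < ρ * δ * log (η * β + 1) * (1 / β + η * τ) := by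
    have hlt : (b / C₁ + ρ * η * δ) / (ρ * δ * η * log (η * β + 1)) < τ + 1 / (η * β) := by
      rw [one_div_mul_eq_div] at hτ
      linarith
    calc b / C₁ + ρ * η * δ < ρ * δ * η * log (η * β + 1) * (τ + 1 / (η * β)) :=
          (div_lt_iff₀' hK).mp hlt
      _ = ρ * δ * log (η * β + 1) * (1 / β + η * τ) := by field_simp; ring
  linarith [affine_le_H₁Deriv hb hC₁ (mul_pos hρ hδ).le hη.le hβ hτ₁]

end H₁

theorem H1_strictMonoOn_general
    (c b C₁ ρ δ η β : ℝ)
    (hb : 0 ≤ b) (hC₁ : 0 < C₁)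
    (hρ : 0 < ρ) (hδ : 0 < δ) (hη : 0 < η) (hβ : 0 < β) :
    StrictMonoOn
      (fun τ : ℝ =>
        c / C₁ + b / (C₁ * τ) + ρ * δ * ((η * β + 1) ^ τ - 1) / β - ρ * η * δ * τ)
      (Set.Ioi (max 1
        (1 / (ρ * δ * η * Real.log (η * β + 1)) * (b / C₁ + ρ * η * δ) -
          1 / (η * β)))) := by
  show StrictMonoOn (H₁ c b C₁ ρ δ η β) _
  refine strictMonoOn_Ioi_of_hasDerivAt_pos (f' := H₁Deriv b C₁ ρ δ η β)
    (fun τ hτ => ?_) (fun τ hτ => ?_) <;>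
  have hτ₁ : 1 < τ := (le_max_left _ _).trans_lt hτ
  · exact hasDerivAt_H₁ hC₁.ne' (by positivity) (by positivity)
  · exact H₁Deriv_pos hb hC₁ hρ hδ hη hβ hτ₁.le ((le_max_right _ _).trans_lt hτ)

/-- the part of the control objective outside the square root,
`H₁(τ) = c/C₁ + b/(C₁τ) + ρδ(B^τ - 1)/β - ρηδτ` with `B = ηβ + 1`, is strictly
increasing on `(τ₁, ∞)`, where
`τ₁ = max{1, (1/(ρδη log B))(b/C₁ + ρηδ) - 1/(ηβ)}`. -/
theorem H1_strictMonoOn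
    (c b C₁ ρ δ η β : ℝ)
    (hc : 0 ≤ c) (hb : 0 ≤ b) (hC₁ : 0 < C₁)
    (hρ : 0 < ρ) (hδ : 0 < δ) (hη : 0 < η) (hβ : 0 < β)
    (hηβ : η * β ≤ 1) :
    StrictMonoOn
      (fun τ : ℝ =>
        c / C₁ + b / (C₁ * τ) + ρ * δ * ((η * β + 1) ^ τ - 1) / β - ρ * η * δ * τ)
      (Set.Ioi (max 1
        (1 / (ρ * δ * η * Real.log (η * β + 1)) * (b / C₁ + ρ * η * δ) -
          1 / (η * β)))) :=
  H1_strictMonoOn_general c b C₁ ρ δ η β hb hC₁ hρ hδ hη hβ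
end
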